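/- arXiv:1901.07695 — 5 statements merged into one kernel-verified Lean document; each statement's English description precedes it below -/
import Mathlib

section
/- Let 0 ≤ α ≤ 1 − 1/r, 3 ≤ r ≤ n−1, and write n = rd + s with 0 ≤ s < r. Then the generalized distance spectral radius of the Turán graph satisfies ρ_{D_α}(T_{n,r}) = (n + 2d + αn − 3 + √((n(1−α) − 1)² + 4s(1−α)(d+1)))/2. -/
/-! On vectors constant on the parts of `T_{n,r}`, `D_α` acts as `diag(αn + |part| - 2) + (1 - α)J`,
because distinct vertices are at distance 2 inside a part and 1 across parts. Taking the value `t`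
on the `s` parts of size `d + 1` and `t - 1` on the parts of size `d`, the eigen-equation becomes
the quadratic `t(t - 1) = (1 - α)(n(t - 1) + s(d + 1))`; its larger root exceeds 1 since
`(1 - α)n ≥ n/r > 1`, and the eigenvalue is `t + αn + d - 2`. As `D_α` is symmetric and entrywise
nonnegative, pairing an eigenvector `x` with this positive eigenvector `z` gives
`|μ| ⟨z, |x|⟩ ≤ ⟨z, D_α |x|⟩ = ρ ⟨z, |x|⟩`, so `ρ` is the largest eigenvalue. -/

open Matrix

/-- The distance matrix of a simple graph, with `(u,v)`-entry the graph distance. -/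
noncomputable def distMatrix {n : ℕ} (G : SimpleGraph (Fin n)) : Matrix (Fin n) (Fin n) ℝ :=
  fun u v => (G.dist u v : ℝ)

/-- The transmission of a vertex: the sum of distances to all vertices. -/
noncomputable def transmission {n : ℕ} (G : SimpleGraph (Fin n)) (u : Fin n) : ℝ :=
  ∑ v, (G.dist u v : ℝ)

/-- The generalized distance matrix `D_α(G) = α · Tr(G) + (1−α) · D(G)`. -/
noncomputable def Dalpha {n : ℕ} (α : ℝ) (G : SimpleGraph (Fin n)) : Matrix (Fin n) (Fin n) ℝ :=
  α • Matrix.diagonal (transmission G) + (1 - α) • distMatrix G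

/-- The largest (real) eigenvalue of a matrix. -/
noncomputable def specRadius {n : ℕ} (M : Matrix (Fin n) (Fin n) ℝ) : ℝ :=
  sSup {μ : ℝ | Module.End.HasEigenvalue (Matrix.toLin' M) μ}

/-- The Wiener index: sum of distances over unordered pairs. -/
noncomputable def wienerIndex {n : ℕ} (G : SimpleGraph (Fin n)) : ℝ :=
  (∑ u, ∑ v, (G.dist u v : ℝ)) / 2

/-- The star `S_n` with center the vertex `0`. -/
def starGraph (n : ℕ) : SimpleGraph (Fin n) where
  Adj u v := u ≠ v ∧ (u.val = 0 ∨ v.val = 0)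
  symm := ⟨by rintro u v ⟨h1, h2⟩; exact ⟨h1.symm, h2.symm⟩⟩
  loopless := ⟨by rintro u ⟨h1, _⟩; exact h1 rfl⟩

/-- The unicyclic graph `S_n⁺`, obtained from the star `S_n` by adding one edge. -/
def starPlus (n : ℕ) : SimpleGraph (Fin n) where
  Adj u v := u ≠ v ∧ (u.val = 0 ∨ v.val = 0 ∨ (u.val = 1 ∧ v.val = 2) ∨ (u.val = 2 ∧ v.val = 1))
  symm := ⟨by rintro u v ⟨h1, h2⟩; exact ⟨h1.symm, by tauto⟩⟩
  loopless := ⟨by rintro u ⟨h1, _⟩; exact h1 rfl⟩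

open Finset

section Perron

variable {ι : Type*} [Fintype ι] {M : Matrix ι ι ℝ}

lemma abs_mulVec_le_mulVec_abs (hM : ∀ i j, 0 ≤ M i j) (x : ι → ℝ) (i : ι) :
    |(M *ᵥ x) i| ≤ (M *ᵥ fun j => |x j|) i :=
  (abs_sum_le_sum_abs _ _).trans_eq <|
    sum_congr rfl fun j _ => by rw [abs_mul, abs_of_nonneg (hM i j)]

lemma abs_le_of_hasEigenvalue_of_pos_eigenvector [DecidableEq ι] (hM : ∀ i j, 0 ≤ M i j)
    (hMt : Mᵀ = M) {ρ μ : ℝ} {z : ι → ℝ} (hz : ∀ i, 0 < z i) (hzρ : M *ᵥ z = ρ • z)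
    (hμ : Module.End.HasEigenvalue (Matrix.toLin' M) μ) : |μ| ≤ ρ := by
  obtain ⟨x, hx⟩ := hμ.exists_hasEigenvector
  have hxμ : M *ᵥ x = μ • x := by rw [← Matrix.toLin'_apply, hx.apply_eq_smul]
  set y : ι → ℝ := fun j => |x j|
  have hy : 0 < z ⬝ᵥ y := by
    obtain ⟨i, hi⟩ := Function.ne_iff.1 hx.2
    exact sum_pos' (fun j _ => mul_nonneg (hz j).le (abs_nonneg _))
      ⟨i, mem_univ _, mul_pos (hz i) (abs_pos.2 hi)⟩
  have key : |μ| * (z ⬝ᵥ y) ≤ ρ * (z ⬝ᵥ y) :=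
    calc |μ| * (z ⬝ᵥ y) = z ⬝ᵥ fun j => |(M *ᵥ x) j| := by
          simp [hxμ, y, dotProduct, mul_sum, abs_mul, mul_left_comm]
      _ ≤ z ⬝ᵥ (M *ᵥ y) := sum_le_sum fun j _ =>
          mul_le_mul_of_nonneg_left (abs_mulVec_le_mulVec_abs hM x j) (hz j).le
      _ = ρ * (z ⬝ᵥ y) := by
          rw [Matrix.dotProduct_mulVec, ← Matrix.mulVec_transpose, hMt, hzρ, smul_dotProduct,
            smul_eq_mul]
  exact le_of_mul_le_mul_right key hy

end Perron

lemma specRadius_eq_of_pos_eigenvector {N : ℕ} (hN : 0 < N) {M : Matrix (Fin N) (Fin N) ℝ}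
    (hM : ∀ i j, 0 ≤ M i j) (hMt : Mᵀ = M) {ρ : ℝ} {z : Fin N → ℝ} (hz : ∀ i, 0 < z i)
    (hzρ : M *ᵥ z = ρ • z) : specRadius M = ρ := by
  have hρ : Module.End.HasEigenvalue (Matrix.toLin' M) ρ :=
    Module.End.hasEigenvalue_of_hasEigenvector
      ⟨Module.End.mem_eigenspace_iff.2 (by rw [Matrix.toLin'_apply, hzρ]),
        fun h => (hz ⟨0, hN⟩).ne' (congrFun h _)⟩
  have hbdd : ∀ μ ∈ {μ : ℝ | Module.End.HasEigenvalue (Matrix.toLin' M) μ}, μ ≤ ρ :=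
    fun μ hμ => (le_abs_self μ).trans (abs_le_of_hasEigenvalue_of_pos_eigenvector hM hMt hz hzρ hμ)
  exact le_antisymm (csSup_le ⟨ρ, hρ⟩ hbdd) (le_csSup ⟨ρ, hbdd⟩ hρ)

section Dalpha

variable {n : ℕ} (α : ℝ) (G : SimpleGraph (Fin n))

lemma Dalpha_mulVec_apply (z : Fin n → ℝ) (u : Fin n) :
    (Dalpha α G *ᵥ z) u = α * transmission G u * z u + (1 - α) * ∑ v, (G.dist u v : ℝ) * z v := by
  rw [Dalpha, Matrix.add_mulVec, Matrix.smul_mulVec, Matrix.smul_mulVec]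
  simp only [Pi.add_apply, Pi.smul_apply, Matrix.mulVec_diagonal, smul_eq_mul, mul_assoc]
  rfl

lemma Dalpha_transpose : (Dalpha α G)ᵀ = Dalpha α G := by
  have : (distMatrix G)ᵀ = distMatrix G := by
    ext u v
    simp [distMatrix, SimpleGraph.dist_comm]
  simp [Dalpha, Matrix.transpose_add, Matrix.transpose_smul, this]

variable {α} in
lemma Dalpha_nonneg (hα0 : 0 ≤ α) (hα1 : α ≤ 1) (u v : Fin n) : 0 ≤ Dalpha α G u v := by
  have htr : 0 ≤ transmission G u := sum_nonneg fun _ _ => Nat.cast_nonneg _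
  simp only [Dalpha, distMatrix, Matrix.add_apply, Matrix.smul_apply, Matrix.diagonal_apply,
    smul_eq_mul]
  split_ifs <;> subst_vars <;> positivity

end Dalpha

section Residues

variable {n r d s : ℕ}

lemma Fin.card_filter_val_eq_count (p : ℕ → Prop) [DecidablePred p] :
    #{v : Fin n | p v} = n.count p := by
  rw [Nat.count_eq_card_filter_range, ← Nat.Iio_eq_range, ← Fin.map_valEmbedding_univ, filter_map,
    card_map]
  rfl

lemma Fin.card_filter_val_mod_eq (hn : n = r * d + s) (hs : s < r) (i : ℕ) :
    #{v : Fin n | v.val % r = i % r} = d + if i % r < s then 1 else 0 := by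
  have hr : 0 < r := by omega
  have hdiv : n / r = d := by rw [hn, Nat.mul_add_div hr, Nat.div_eq_of_lt hs, add_zero]
  have hmod : n % r = s := by rw [hn, Nat.mul_add_mod, Nat.mod_eq_of_lt hs]
  rw [Fin.card_filter_val_eq_count (· % r = i % r), ← hdiv, ← hmod]
  exact Nat.count_modEq_card n hr i

lemma Fin.card_filter_val_mod_lt (hn : n = r * d + s) (hs : s < r) :
    #{v : Fin n | v.val % r < s} = s * (d + 1) := by
  rw [card_eq_sum_card_fiberwise (f := fun v : Fin n => v.val % r) (t := range s)
    fun v hv => mem_range.2 (mem_filter.1 hv).2]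
  have hfiber : ∀ i ∈ range s, #{v ∈ ({v : Fin n | v.val % r < s} : Finset _) | v.val % r = i}
      = d + 1 := by
    intro i hi
    have hir : i % r = i := Nat.mod_eq_of_lt ((mem_range.1 hi).trans hs)
    have hpart : {v ∈ ({v : Fin n | v.val % r < s} : Finset _) | v.val % r = i}
        = ({v : Fin n | v.val % r = i % r} : Finset _) := by
      rw [filter_filter, hir]
      exact filter_congr fun v _ => ⟨And.right, fun h => ⟨h ▸ mem_range.1 hi, h⟩⟩
    rw [hpart, Fin.card_filter_val_mod_eq hn hs i, hir, if_pos (mem_range.1 hi)]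
  rw [sum_congr rfl hfiber, Finset.sum_const, card_range, smul_eq_mul]

end Residues

namespace SimpleGraph

variable {n r d s : ℕ}

def turanPart (n r : ℕ) (u : Fin n) : Finset (Fin n) := {v | v.val % r = u.val % r}

lemma card_turanPart (hn : n = r * d + s) (hs : s < r) (u : Fin n) :
    #(turanPart n r u) = d + if u.val % r < s then 1 else 0 :=
  Fin.card_filter_val_mod_eq hn hs u

lemma exists_turanGraph_adj (hr : 2 ≤ r) (hrn : r ≤ n) (u : Fin n) :
    ∃ w, (turanGraph n r).Adj u w := by
  simp only [turanGraph_adj]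
  rcases Nat.eq_zero_or_pos (u.val % r) with h | h
  · exact ⟨⟨1, by omega⟩, by simp [h, Nat.mod_eq_of_lt (show 1 < r by omega)]⟩
  · exact ⟨⟨0, by omega⟩, by simp; omega⟩

lemma turanGraph_dist (hr : 2 ≤ r) (hrn : r ≤ n) (u v : Fin n) :
    (turanGraph n r).dist u v = if u = v then 0 else if u.val % r = v.val % r then 2 else 1 := by
  split_ifs with huv hmod
  · exact huv ▸ dist_self
  · obtain ⟨w, hw⟩ := exists_turanGraph_adj hr hrn u
    have hvw : (turanGraph n r).Adj v w := by rw [turanGraph_adj] at hw ⊢; rwa [← hmod]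
    rw [dist, ENat.toNat_eq_iff two_ne_zero, Nat.cast_ofNat, edist_eq_two_iff]
    exact ⟨huv, by simp [turanGraph_adj, hmod], w, hw, hvw⟩
  · exact dist_eq_one_iff_adj.2 (turanGraph_adj.2 hmod)

lemma sum_turanGraph_dist_mul (hr : 2 ≤ r) (hrn : r ≤ n) (u : Fin n) {z : Fin n → ℝ}
    (hz : ∀ v ∈ turanPart n r u, z v = z u) :
    ∑ v, ((turanGraph n r).dist u v : ℝ) * z v = ∑ v, z v + (#(turanPart n r u) - 2) * z u := by
  have hdist : ∀ v, ((turanGraph n r).dist u v : ℝ) =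
      1 + (if v ∈ turanPart n r u then 1 else 0) - (if v = u then 2 else 0) := by
    intro v
    rw [turanGraph_dist hr hrn]
    by_cases huv : u = v
    · subst huv; norm_num [turanPart]
    · simp only [turanPart, mem_filter, mem_univ, true_and, if_neg huv, if_neg (Ne.symm huv),
        eq_comm (a := v.val % r)]
      split_ifs <;> norm_num
  have hpart : ∑ v ∈ turanPart n r u, z v = #(turanPart n r u) * z u := by
    rw [sum_congr rfl hz, sum_const, nsmul_eq_mul]
  simp only [hdist, add_mul, sub_mul, one_mul, ite_mul, zero_mul, sum_add_distrib, sum_sub_distrib,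
    sum_ite_mem, univ_inter, hpart, sum_ite_eq', mem_univ, if_true]
  ring

lemma transmission_turanGraph (hr : 2 ≤ r) (hrn : r ≤ n) (u : Fin n) :
    transmission (turanGraph n r) u = n + #(turanPart n r u) - 2 := by
  have := sum_turanGraph_dist_mul hr hrn u (z := fun _ => 1) fun _ _ => rfl
  simp only [mul_one, sum_const, card_univ, Fintype.card_fin, nsmul_eq_mul] at this
  rw [transmission, this]
  ring

lemma Dalpha_turanGraph_mulVec_apply (hr : 2 ≤ r) (hrn : r ≤ n) (α : ℝ) (u : Fin n)
    {z : Fin n → ℝ} (hz : ∀ v ∈ turanPart n r u, z v = z u) :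
    (Dalpha α (turanGraph n r) *ᵥ z) u =
      (α * n + #(turanPart n r u) - 2) * z u + (1 - α) * ∑ v, z v := by
  rw [Dalpha_mulVec_apply, transmission_turanGraph hr hrn, sum_turanGraph_dist_mul hr hrn u hz]
  ring

lemma Dalpha_turanGraph_mulVec_eq_smul (hr : 2 ≤ r) (hrn : r ≤ n) (hn : n = r * d + s)
    (hs : s < r) {α t : ℝ} (ht : t * (t - 1) = (1 - α) * (n * (t - 1) + s * (d + 1))) :
    Dalpha α (turanGraph n r) *ᵥ (fun u => if u.val % r < s then t else t - 1) =
      (t + α * n + d - 2) • fun u => if u.val % r < s then t else t - 1 := by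
  have hsum : ∑ v : Fin n, (if v.val % r < s then t else t - 1) = n * (t - 1) + s * (d + 1) := by
    have : ∀ v : Fin n, (if v.val % r < s then t else t - 1) =
        (t - 1) + if v.val % r < s then 1 else 0 := fun v => by split_ifs <;> ring
    simp only [this, sum_add_distrib, sum_const, card_univ, Fintype.card_fin, nsmul_eq_mul,
      sum_boole, Fin.card_filter_val_mod_lt hn hs]
    push_cast
    ring
  ext u
  rw [Dalpha_turanGraph_mulVec_apply hr hrn α u fun v hv => by rw [(mem_filter.1 hv).2], hsum,
    card_turanPart hn hs, Pi.smul_apply, smul_eq_mul]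
  split_ifs
  · push_cast; linear_combination -ht
  · push_cast; linear_combination -ht

end SimpleGraph

/-- The generalized distance spectral radius of the Turán graph `T_{n,r}`. -/
theorem stmt_3 {n r d s : ℕ} (hr3 : 3 ≤ r) (hrn : r ≤ n - 1)
    (hn : n = r * d + s) (hs : s < r)
    (α : ℝ) (hα0 : 0 ≤ α) (hα1 : α ≤ 1 - 1 / (r : ℝ)) :
    specRadius (Dalpha α (SimpleGraph.turanGraph n r)) =
      ((n : ℝ) + 2 * d + α * n - 3 +
        Real.sqrt ((n * (1 - α) - 1) ^ 2 + 4 * s * (1 - α) * (d + 1))) / 2 := by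
  have hrn' : r + 1 ≤ n := by omega
  have hr0 : (0 : ℝ) < 1 / r := by positivity
  have hβ0 : 0 ≤ 1 - α := by linarith
  have hβn : 1 < (1 - α) * n :=
    calc 1 < (n : ℝ) / r := by rw [one_lt_div (by positivity)]; exact_mod_cast hrn'
      _ = 1 / r * n := by ring
      _ ≤ (1 - α) * n := by gcongr; linarith
  set q := Real.sqrt ((n * (1 - α) - 1) ^ 2 + 4 * s * (1 - α) * (d + 1))
  have hq0 : 0 ≤ q := Real.sqrt_nonneg _
  have hq2 : q ^ 2 = (n * (1 - α) - 1) ^ 2 + 4 * s * (1 - α) * (d + 1) :=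
    Real.sq_sqrt (by positivity)
  set t := (1 + (1 - α) * n + q) / 2
  have ht : t * (t - 1) = (1 - α) * (n * (t - 1) + s * (d + 1)) := by
    linear_combination (1 / 4 : ℝ) * hq2
  have ht1 : 1 < t := by simp only [t]; linarith
  rw [specRadius_eq_of_pos_eigenvector (by omega) (Dalpha_nonneg _ hα0 (by linarith))
    (Dalpha_transpose _ _) (fun u => by split_ifs <;> linarith)
    (SimpleGraph.Dalpha_turanGraph_mulVec_eq_smul (by omega) (by omega) hn hs ht)]
  ring
end

section
/- Let G be a tree of order n ≥ 4 that is not isomorphic to the star S_n. Then its Wiener index satisfies W(G) ≥ n² − n − 2 > W(S_n) = (n−1)². -/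
/-! Every vertex at distance at least 3 from `u` contributes at least 3 to the transmission of
`u`, and the vertices at distance exactly 2 from `u` number at most `∑_{x ∼ u} (deg x - 1)`.
Summing over `u` gives `2 W(G) ≥ 3n(n - 1) - ∑ deg - ∑ deg²` for every connected graph. In a tree
`∑ deg = 2n - 2`, and if no vertex has degree `n - 1` (i.e. the tree is not a star), convexity
gives `∑ (deg - 1)² ≤ (n - 3)² + 1`; together these yield `W(G) ≥ n² - n - 2`. The star has
diameter 2, so `2 W(S_n) = 2n(n - 1) - ∑ deg = 2(n - 1)²`. -/

open Matrix

open Finset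

lemma sum_sq_le_of_sum_eq {ι : Type*} {s : Finset ι} {x : ι → ℝ} {S M : ℝ}
    (hnonneg : ∀ i ∈ s, 0 ≤ x i) (hsum : ∑ i ∈ s, x i = S) {i₀ : ι} (hi₀ : i₀ ∈ s)
    (hlow : S - M ≤ x i₀) (hup : x i₀ ≤ M) :
    ∑ i ∈ s, x i ^ 2 ≤ M ^ 2 + (S - M) ^ 2 := by
  classical
  rw [← add_sum_erase s _ hi₀] at hsum ⊢
  have hrest := sum_sq_le_sq_sum_of_nonneg (s := s.erase i₀) (f := x)
    fun i hi ↦ hnonneg i (mem_of_mem_erase hi)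
  rw [show ∑ i ∈ s.erase i₀, x i = S - x i₀ by linarith] at hrest
  nlinarith

namespace SimpleGraph

variable {V : Type*} {G : SimpleGraph V}

lemma exists_adj_adj_of_dist_eq_two {u v : V} (h : G.dist u v = 2) :
    ∃ x, G.Adj u x ∧ G.Adj x v := by
  have hr : G.Reachable u v := Reachable.of_dist_ne_zero (by omega)
  have he : G.edist u v = 2 := by rw [← hr.coe_dist_eq_edist, h]; rfl
  obtain ⟨x, hx⟩ := (edist_eq_two_iff.mp he).2.2
  rw [mem_commonNeighbors] at hx
  exact ⟨x, hx.1, hx.2.symm⟩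

lemma IsUniversal.dist_add_ite_eq_two [DecidableEq V] [DecidableRel G.Adj] {c : V}
    (hc : G.IsUniversal c) (u v : V) :
    G.dist u v + (if G.Adj u v then 1 else 0) + (if u = v then 2 else 0) = 2 := by
  by_cases huv : u = v
  · simp [huv]
  by_cases hadj : G.Adj u v
  · simp [hadj, huv, dist_eq_one_iff_adj.mpr hadj]
  have hle : G.dist u v ≤ 2 := by
    rcases eq_or_ne u c with rfl | huc
    · exact absurd (hc huv) hadj
    rcases eq_or_ne v c with rfl | hvc
    · exact absurd (hc (Ne.symm huv)).symm hadj
    simpa using dist_le (.cons (hc (Ne.symm huc)).symm (.cons (hc (Ne.symm hvc)) .nil))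
  have := (Connected.of_isUniversal hc).one_lt_dist_of_ne_of_not_adj huv hadj
  simp only [hadj, huv, if_false]
  omega

lemma IsTree.eq_starGraph_of_isUniversal (hG : G.IsTree) {c : V} (hc : G.IsUniversal c) :
    G = starGraph c :=
  (isTree_iff_maximal_isAcyclic.mp (isTree_starGraph c)).2.eq_of_ge hG.isAcyclic
    fun u v h ↦ by
      rw [starGraph_adj] at h
      obtain ⟨huv, rfl | rfl⟩ := h
      exacts [hc huv, (hc huv.symm).symm]

def starGraphIso [DecidableEq V] (c d : V) : starGraph c ≃g starGraph d :=
  ⟨Equiv.swap c d, fun {u v} ↦ by simp [Equiv.swap_apply_eq_iff]⟩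

section Finite

variable [Fintype V] [DecidableRel G.Adj]

lemma sum_sum_neighborFinset {M : Type*} [AddCommMonoid M] (f : V → M) :
    ∑ u, ∑ x ∈ G.neighborFinset u, f x = ∑ x, G.degree x • f x := by
  rw [sum_comm' (t' := univ) (s' := fun x ↦ G.neighborFinset x) (by simp [adj_comm])]
  simp [card_neighborFinset_eq_degree]

lemma IsTree.sum_degrees_add_two (hG : G.IsTree) :
    ∑ v, G.degree v + 2 = 2 * Fintype.card V := by
  rw [sum_degrees_eq_twice_card_edges, ← hG.card_edgeFinset]
  ring

lemma IsTree.exists_two_le_degree (hG : G.IsTree) (hcard : 3 ≤ Fintype.card V) :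
    ∃ v, 2 ≤ G.degree v := by
  by_contra! h
  have : ∑ v, G.degree v ≤ ∑ _v : V, 1 := sum_le_sum fun v _ ↦ by linarith [h v]
  simp only [sum_const, card_univ, smul_eq_mul, mul_one] at this
  linarith [hG.sum_degrees_add_two]

lemma IsTree.sum_degree_sq_add_le (hG : G.IsTree)
    (hmax : ∀ v, G.degree v + 2 ≤ Fintype.card V) :
    ∑ v, G.degree v ^ 2 + 3 * Fintype.card V ≤ Fintype.card V ^ 2 + 6 := by
  set n := Fintype.card V
  obtain ⟨v₀⟩ := hG.connected.nonempty
  have : Nontrivial V := Fintype.one_lt_card_iff_nontrivial.mp (by linarith [hmax v₀])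
  have hposN (v : V) : 0 < G.degree v := hG.connected.preconnected.degree_pos_of_nontrivial v
  have hpos (v : V) : (1 : ℝ) ≤ G.degree v := by exact_mod_cast hposN v
  obtain ⟨i₀, hi₀⟩ := hG.exists_two_le_degree (by linarith [hmax v₀, hposN v₀])
  have hi₀R : (2 : ℝ) ≤ G.degree i₀ := by exact_mod_cast hi₀
  have hmaxR : (G.degree i₀ : ℝ) + 2 ≤ n := by exact_mod_cast hmax i₀
  have hsum : ∑ v, ((G.degree v : ℝ) - 1) = n - 2 := by
    have : ∑ v, (G.degree v : ℝ) + 2 = 2 * n := by exact_mod_cast hG.sum_degrees_add_two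
    simp only [sum_sub_distrib, sum_const, card_univ, nsmul_eq_mul, mul_one]
    linarith
  have hsq := sum_sq_le_of_sum_eq (M := n - 3) (fun v _ ↦ by linarith [hpos v])
    hsum (mem_univ i₀) (by linarith) (by linarith)
  have hexpand : ∑ v, (G.degree v : ℝ) ^ 2
      = ∑ v, ((G.degree v : ℝ) - 1) ^ 2 + 2 * ∑ v, ((G.degree v : ℝ) - 1) + n := by
    have (v : V) : (G.degree v : ℝ) ^ 2
        = ((G.degree v : ℝ) - 1) ^ 2 + 2 * ((G.degree v : ℝ) - 1) + 1 := by ring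
    simp only [this, sum_add_distrib, ← mul_sum, sum_const, card_univ, nsmul_eq_mul, mul_one, n]
  have : (∑ v, G.degree v ^ 2 + 3 * n : ℕ) ≤ (n ^ 2 + 6 : ℝ) := by
    push_cast
    nlinarith
  exact_mod_cast this

variable [DecidableEq V]

lemma card_filter_dist_eq_two_add_degree_le (u : V) :
    #{v | G.dist u v = 2} + G.degree u ≤ ∑ x ∈ G.neighborFinset u, G.degree x := by
  have hsub : ({v | G.dist u v = 2} : Finset V) ⊆
      (G.neighborFinset u).biUnion fun x ↦ (G.neighborFinset x).erase u := by
    intro v hv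
    rw [mem_filter] at hv
    obtain ⟨x, hux, hxv⟩ := exists_adj_adj_of_dist_eq_two hv.2
    have hvu : v ≠ u := by rintro rfl; simp at hv
    simp only [mem_biUnion, mem_erase, mem_neighborFinset]
    exact ⟨x, hux, hvu, hxv⟩
  have herase : ∀ x ∈ G.neighborFinset u, #((G.neighborFinset x).erase u) + 1 = G.degree x := by
    intro x hx
    rw [mem_neighborFinset] at hx
    rw [card_erase_add_one (by simpa using hx.symm), card_neighborFinset_eq_degree]
  calc #{v | G.dist u v = 2} + G.degree u
      ≤ ∑ x ∈ G.neighborFinset u, #((G.neighborFinset x).erase u) + #(G.neighborFinset u) := by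
        rw [card_neighborFinset_eq_degree]
        exact Nat.add_le_add_right ((card_le_card hsub).trans card_biUnion_le) _
    _ = ∑ x ∈ G.neighborFinset u, G.degree x := by
        rw [card_eq_sum_ones, ← sum_add_distrib]
        exact sum_congr rfl herase

lemma Connected.three_mul_card_le_sum_dist (hG : G.Connected) (u : V) :
    3 * Fintype.card V ≤ ∑ v, G.dist u v + 2 * G.degree u + #{v | G.dist u v = 2} + 3 := by
  have hpoint (v : V) : 3 ≤ G.dist u v + 2 * (if G.Adj u v then 1 else 0)
      + (if G.dist u v = 2 then 1 else 0) + (if u = v then 3 else 0) := by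
    by_cases huv : u = v
    · simp [huv]
    by_cases hadj : G.Adj u v
    · simp [hadj, huv, dist_eq_one_iff_adj.mpr hadj]
    have := hG.one_lt_dist_of_ne_of_not_adj huv hadj
    split_ifs <;> omega
  have := sum_le_sum fun v (_ : v ∈ univ) ↦ hpoint v
  simp only [sum_const, card_univ, smul_eq_mul, sum_add_distrib, ← mul_sum, sum_boole,
    Nat.cast_id, sum_ite_eq, mem_univ, if_true, ← neighborFinset_eq_filter,
    card_neighborFinset_eq_degree] at this
  linarith

lemma Connected.three_mul_card_sq_le (hG : G.Connected) :
    3 * Fintype.card V ^ 2 ≤ ∑ u, ∑ v, G.dist u v + ∑ u, G.degree u + ∑ u, G.degree u ^ 2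
      + 3 * Fintype.card V := by
  have hvertex := sum_le_sum fun u (_ : u ∈ univ) ↦ hG.three_mul_card_le_sum_dist u
  have hsphere := sum_le_sum fun u (_ : u ∈ univ) ↦
    card_filter_dist_eq_two_add_degree_le (G := G) u
  rw [sum_sum_neighborFinset] at hsphere
  simp only [sum_add_distrib, ← mul_sum, sum_const, card_univ, smul_eq_mul] at hvertex hsphere
  simp only [sq] at hsphere ⊢
  linarith

lemma IsUniversal.sum_sum_dist_add {c : V} (hc : G.IsUniversal c) :
    ∑ u, ∑ v, G.dist u v + ∑ u, G.degree u + 2 * Fintype.card V = 2 * Fintype.card V ^ 2 := by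
  have := sum_congr rfl fun u (_ : u ∈ univ) ↦
    sum_congr rfl fun v (_ : v ∈ univ) ↦ hc.dist_add_ite_eq_two u v
  simp only [sum_add_distrib, sum_boole, sum_ite_eq, mem_univ, if_true, sum_const, card_univ,
    smul_eq_mul, Nat.cast_id, ← neighborFinset_eq_filter, card_neighborFinset_eq_degree] at this
  linarith

end Finite

end SimpleGraph

lemma starGraph_eq {n : ℕ} (hn : 0 < n) :
    starGraph n = SimpleGraph.starGraph (⟨0, hn⟩ : Fin n) := by
  ext u v
  simp [starGraph, Fin.ext_iff]

lemma wienerIndex_starGraph {n : ℕ} (hn : 0 < n) :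
    wienerIndex (starGraph n) = ((n : ℝ) - 1) ^ 2 := by
  classical
  set c : Fin n := ⟨0, hn⟩
  have hdist := (SimpleGraph.isUniversal_starGraph_self (r := c)).sum_sum_dist_add
  have hdeg := (SimpleGraph.isTree_starGraph c).sum_degrees_add_two
  simp only [Fintype.card_fin] at hdist hdeg
  have hdistR : ((∑ u, ∑ v, (SimpleGraph.starGraph c).dist u v : ℕ) : ℝ)
      + ((∑ u, (SimpleGraph.starGraph c).degree u : ℕ) : ℝ) + 2 * n = 2 * n ^ 2 := by
    exact_mod_cast hdist
  have hdegR : ((∑ u, (SimpleGraph.starGraph c).degree u : ℕ) : ℝ) + 2 = 2 * n := by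
    exact_mod_cast hdeg
  rw [wienerIndex, starGraph_eq hn]
  push_cast at hdistR hdegR ⊢
  linarith

lemma wienerIndex_ge_of_isTree {n : ℕ} {G : SimpleGraph (Fin n)} (hG : G.IsTree)
    (hns : ¬ Nonempty (G ≃g starGraph n)) : wienerIndex G ≥ (n : ℝ) ^ 2 - n - 2 := by
  classical
  have hmax (v : Fin n) : G.degree v + 2 ≤ Fintype.card (Fin n) := by
    have hnot : ¬ G.IsUniversal v := fun hv ↦ hns <| by
      rw [hG.eq_starGraph_of_isUniversal hv, starGraph_eq v.pos]
      exact ⟨SimpleGraph.starGraphIso v _⟩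
    have := (G.degree_lt_card_sub_one v).mpr hnot
    omega
  have hlow := hG.connected.three_mul_card_sq_le
  have hdeg := hG.sum_degrees_add_two
  have hsq := hG.sum_degree_sq_add_le hmax
  simp only [Fintype.card_fin] at hlow hdeg hsq
  have hlowR : 3 * (n : ℝ) ^ 2 ≤ ((∑ u, ∑ v, G.dist u v : ℕ) : ℝ) + ((∑ u, G.degree u : ℕ) : ℝ)
      + ((∑ u, G.degree u ^ 2 : ℕ) : ℝ) + 3 * n := by exact_mod_cast hlow
  have hdegR : ((∑ u, G.degree u : ℕ) : ℝ) + 2 = 2 * n := by exact_mod_cast hdeg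
  have hsqR : ((∑ u, G.degree u ^ 2 : ℕ) : ℝ) + 3 * n ≤ n ^ 2 + 6 := by exact_mod_cast hsq
  rw [wienerIndex]
  push_cast at hlowR hdegR hsqR ⊢
  linarith

/-- A tree of order `n ≥ 4` other than the star satisfies
`W(G) ≥ n² − n − 2 > W(S_n) = (n−1)²`. -/
theorem stmt_7 {n : ℕ} (G : SimpleGraph (Fin n)) (hT : G.IsTree) (hn : 4 ≤ n)
    (hns : ¬ Nonempty (G ≃g starGraph n)) :
    wienerIndex G ≥ (n : ℝ) ^ 2 - n - 2 ∧
    (n : ℝ) ^ 2 - n - 2 > wienerIndex (starGraph n) ∧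
    wienerIndex (starGraph n) = ((n : ℝ) - 1) ^ 2 := by
  have hn' : (4 : ℝ) ≤ n := by exact_mod_cast hn
  rw [wienerIndex_starGraph (by omega)]
  exact ⟨wienerIndex_ge_of_isTree hT hns, by nlinarith, rfl⟩
end

section
/- Let G be a connected unicyclic graph of order n ≥ 6 that is not isomorphic to S_n^+. Then its Wiener index satisfies W(G) ≥ n² − n − 4 > W(S_n^+) = n² − 2n. -/
open Matrix

/-!
Write `t(u) = ∑ᵥ d(u,v)` and `D(G) = ∑ᵤ t(u) = 2 W(G)`. In a connected graph
`d(u,v) + [v = u] + [v ∈ N[u]] = 2 + (d(u,v) - 2)` for every `v`, so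
`t(u) + deg u + 2 = 2n + ∑ᵥ (d(u,v) - 2)` and `D(G) + 2|E| + 2n = 2n² + ∑ᵤ ∑ᵥ (d(u,v) - 2)`.
For `S_n⁺` every distance is at most `2`, hence `D(S_n⁺) = 2n² - 4n`.

For unicyclic `G ≠ S_n⁺` we show `D(G) ≥ 2n² - 2n - 8`. A cycle is handled directly, since every
ball of radius `2` has at most `5` vertices. Otherwise `G` has a pendant vertex `u` with neighbour
`w`; deleting `u` changes no other distance, so `D(G) = D(G - u) + 2 t(u)`. A unicyclic graph with
a universal vertex is `S_n⁺` (that vertex carries `n - 1` of the `n` edges), so `w` is not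
universal, some vertex lies at distance `≥ 3` from `u`, and `t(u) ≥ 2n - 2`; with the induction
hypothesis for `G - u` this suffices. When induction does not apply we get `t(u) ≥ 3n - 7`
instead, which makes up for the trivial bound `D(G - u) ≥ 2(n-1)² - 4(n-1)`: for `n = 5` this is
`t(u) ≥ 2n - 2`, and if `G - u` is `S_{n-1}⁺` or a cycle then `w` has degree at most `3`, so the
ball of radius `2` around `u` has at most `4` vertices.
-/

open Finset Fintype

namespace SimpleGraph

variable {V : Type*}

lemma Connected.dist_induce_compl_singleton {G : SimpleGraph V} (hG : G.Connected) {u : V}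
    (hu : (G.neighborSet u).Subsingleton) (a b : ({u}ᶜ : Set V)) :
    (G.induce {u}ᶜ).dist a b = G.dist a b := by
  obtain ⟨p, hp, hlen⟩ := hG.exists_path_of_dist a b
  have hsupp : ∀ x ∈ p.support, x ∈ ({u}ᶜ : Set V) := fun x hx hxu => by
    rw [Set.mem_singleton_iff] at hxu
    subst hxu
    exact hp.isTrail.not_mem_support_of_subsingleton_neighborSet (Ne.symm a.2) (Ne.symm b.2) hu hx
  have hle := dist_le (p.induce _ hsupp)
  rw [← Walk.length_map (Embedding.induce _).toHom, Walk.map_induce] at hle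
  obtain ⟨q, hq⟩ := Reachable.exists_walk_length_eq_dist ⟨p.induce _ hsupp⟩
  have hge := dist_le (q.map (Embedding.induce _).toHom)
  rw [Walk.length_map, hq] at hge
  exact le_antisymm (hle.trans_eq hlen) hge

lemma IsUniversal.dist_le_two {G : SimpleGraph V} {c : V} (hc : G.IsUniversal c) (u v : V) :
    G.dist u v ≤ 2 := by
  by_cases huc : u = c
  · subst huc
    by_cases huv : u = v
    · simp [huv]
    · exact (dist_eq_one_iff_adj.mpr (hc huv)).le.trans (by norm_num)
  by_cases hvc : v = c
  · subst hvc
    exact (dist_eq_one_iff_adj.mpr (hc (Ne.symm huc)).symm).le.trans (by norm_num)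
  exact dist_le ((Walk.nil.cons (hc (Ne.symm hvc))).cons (hc (Ne.symm huc)).symm)

lemma isUniversal_of_isUniversal_induce_compl_singleton {G : SimpleGraph V} {u w : V}
    (huw : G.Adj u w) (h : (G.induce {u}ᶜ).IsUniversal ⟨w, huw.ne'⟩) : G.IsUniversal w := by
  intro v hwv
  by_cases hvu : v = u
  · exact hvu ▸ huw.symm
  · exact h (show (⟨w, huw.ne'⟩ : ({u}ᶜ : Set V)) ≠ ⟨v, hvu⟩ from
      fun h' => hwv (congrArg Subtype.val h'))

variable [Fintype V] (G : SimpleGraph V)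

noncomputable def distSum (u : V) : ℕ := ∑ v, G.dist u v

noncomputable def totalDistSum : ℕ := ∑ u, G.distSum u

lemma card_le_card_filter_dist_le_two_add (u : V) :
    card V ≤ #{v | G.dist u v ≤ 2} + ∑ v, (G.dist u v - 2) := by
  calc card V = ∑ _v : V, 1 := by simp
    _ ≤ ∑ v, ((if G.dist u v ≤ 2 then 1 else 0) + (G.dist u v - 2)) :=
        sum_le_sum fun v _ => by split_ifs <;> omega
    _ = _ := by rw [sum_add_distrib, sum_boole]; simp

variable {G} [DecidableEq V]

lemma sum_compl_singleton_add {M : Type*} [AddCommMonoid M] (f : V → M) (u : V) :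
    ∑ x : ({u}ᶜ : Set V), f x + f u = ∑ x, f x := by
  rw [← sum_compl_add_sum {u} f, sum_singleton]
  congr 1
  exact (sum_subtype _ (by simp) f).symm

lemma Connected.totalDistSum_eq_of_subsingleton_neighborSet (hG : G.Connected) {u : V}
    (hu : (G.neighborSet u).Subsingleton) :
    G.totalDistSum = (G.induce {u}ᶜ).totalDistSum + 2 * G.distSum u := by
  have hrow (a : ({u}ᶜ : Set V)) : G.distSum a = (G.induce {u}ᶜ).distSum a + G.dist u a := by
    rw [distSum, distSum, ← sum_compl_singleton_add _ u, dist_comm]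
    simp only [hG.dist_induce_compl_singleton hu]
  have hcol : ∑ a : ({u}ᶜ : Set V), G.dist u a = G.distSum u := by
    rw [distSum, ← sum_compl_singleton_add _ u, dist_self, add_zero]
  rw [totalDistSum, totalDistSum, ← sum_compl_singleton_add _ u]
  simp only [hrow, sum_add_distrib, hcol]
  ring

variable [DecidableRel G.Adj]

lemma Connected.dist_add_ite_add_ite (hG : G.Connected) (u v : V) :
    G.dist u v + (if u = v then 1 else 0) + (if v ∈ insert u (G.neighborFinset u) then 1 else 0)
      = 2 + (G.dist u v - 2) := by
  by_cases huv : u = v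
  · subst huv; simp
  by_cases hadj : G.Adj u v
  · simp [huv, hadj, dist_eq_one_iff_adj.mpr hadj]
  · have := hG.one_lt_dist_of_ne_of_not_adj huv hadj
    simp only [huv, Ne.symm huv, hadj, if_false, mem_insert, mem_neighborFinset, or_self]
    omega

-- `G.dist u v - 2` is truncated: only vertices at distance at least `3` contribute.
lemma Connected.distSum_add_degree_add_two (hG : G.Connected) (u : V) :
    G.distSum u + G.degree u + 2 = 2 * card V + ∑ v, (G.dist u v - 2) := by
  have h := Finset.sum_congr rfl fun v (_ : v ∈ univ) => hG.dist_add_ite_add_ite u v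
  rw [sum_add_distrib, sum_add_distrib, Fintype.sum_ite_eq, sum_boole, filter_mem_eq_inter,
    univ_inter, card_insert_of_notMem (by simp), card_neighborFinset_eq_degree,
    sum_add_distrib] at h
  simp only [sum_const, card_univ, smul_eq_mul, Nat.cast_id] at h
  unfold distSum
  omega

lemma Connected.totalDistSum_add (hG : G.Connected) :
    G.totalDistSum + 2 * #G.edgeFinset + 2 * card V
      = 2 * card V ^ 2 + ∑ u, ∑ v, (G.dist u v - 2) := by
  have h := Finset.sum_congr rfl fun u (_ : u ∈ univ) => hG.distSum_add_degree_add_two u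
  simp only [sum_add_distrib, sum_degrees_eq_twice_card_edges, sum_const, card_univ,
    smul_eq_mul] at h
  unfold totalDistSum
  rw [sq]
  linarith

lemma Connected.filter_dist_le_two_subset (hG : G.Connected) (u : V) :
    ({v | G.dist u v ≤ 2} : Finset V) ⊆
      insert u ((G.neighborFinset u).biUnion fun y => insert y ((G.neighborFinset y).erase u)) := by
  intro v hv
  rw [mem_filter] at hv
  rcases Nat.lt_or_ge (G.dist u v) 2 with h | h
  · by_cases huv : u = v
    · simp [huv]
    · have hadj : G.Adj u v := dist_eq_one_iff_adj.mp (by have := hG.pos_dist_of_ne huv; omega)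
      exact mem_insert_of_mem (mem_biUnion.mpr ⟨v, by simpa using hadj, mem_insert_self _ _⟩)
  · have h2 : G.edist u v = 2 := by
      rw [← (hG u v).coe_dist_eq_edist, le_antisymm hv.2 h]; rfl
    obtain ⟨huv, -, y, hy⟩ := edist_eq_two_iff.mp h2
    rw [mem_commonNeighbors] at hy
    exact mem_insert_of_mem (mem_biUnion.mpr ⟨y, by simpa using hy.1,
      mem_insert_of_mem (by simpa [Ne.symm huv, adj_comm] using hy.2)⟩)

lemma Connected.card_filter_dist_le_two_le (hG : G.Connected) (u : V) :
    #{v | G.dist u v ≤ 2} ≤ 1 + ∑ y ∈ G.neighborFinset u, G.degree y := by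
  refine (card_le_card (hG.filter_dist_le_two_subset u)).trans ((card_insert_le _ _).trans ?_)
  rw [add_comm]
  refine add_le_add_right (card_biUnion_le.trans (sum_le_sum fun y hy => ?_)) 1
  have hu : u ∈ G.neighborFinset y := by simpa [adj_comm] using hy
  have := card_pos.mpr ⟨u, hu⟩
  rw [← card_neighborFinset_eq_degree]
  exact (card_insert_le _ _).trans (by rw [card_erase_of_mem hu]; omega)

lemma Connected.two_mul_card_sq_le_totalDistSum_of_forall_degree_eq_two (hG : G.Connected)
    (h2 : ∀ v, G.degree v = 2) (h6 : 6 ≤ card V) :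
    2 * card V ^ 2 ≤ G.totalDistSum + 2 * card V + 8 := by
  have hE : 2 * #G.edgeFinset = 2 * card V := by
    rw [← sum_degrees_eq_twice_card_edges]; simp [h2, mul_comm]
  have hexcess (u : V) : card V ≤ 5 + ∑ v, (G.dist u v - 2) := by
    have hball := hG.card_filter_dist_le_two_le u
    rw [sum_congr rfl fun y _ => h2 y, sum_const, card_neighborFinset_eq_degree, h2,
      smul_eq_mul] at hball
    have := card_le_card_filter_dist_le_two_add G u
    omega
  have hsum := sum_le_sum fun u (_ : u ∈ univ) => hexcess u
  simp only [sum_const, card_univ, smul_eq_mul, sum_add_distrib] at hsum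
  have := hG.totalDistSum_add
  nlinarith

section Pendant

variable {u w : V}

omit [DecidableEq V] in
lemma neighborFinset_eq_singleton_of_degree_eq_one (huw : G.Adj u w) (hu : G.degree u = 1) :
    G.neighborFinset u = {w} := by
  obtain ⟨a, ha⟩ := card_eq_one.mp ((card_neighborFinset_eq_degree G u).trans hu)
  have : w ∈ G.neighborFinset u := by simpa using huw
  rw [ha, mem_singleton] at this
  rw [ha, this]

lemma Connected.three_mul_card_le_distSum_of_degree_eq_one (hG : G.Connected) (huw : G.Adj u w)
    (hu : G.degree u = 1) :
    3 * card V ≤ G.distSum u + 3 + #(insert w (G.neighborFinset w)) := by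
  have hball : ({v | G.dist u v ≤ 2} : Finset V) ⊆ insert w (G.neighborFinset w) := by
    refine (hG.filter_dist_le_two_subset u).trans ?_
    rw [neighborFinset_eq_singleton_of_degree_eq_one huw hu, singleton_biUnion, insert_subset_iff]
    exact ⟨mem_insert_of_mem ((mem_neighborFinset _ _ _).mpr huw.symm),
      insert_subset_insert _ (erase_subset _ _)⟩
  have := card_le_card_filter_dist_le_two_add G u
  have := card_le_card hball
  have := hG.distSum_add_degree_add_two u
  omega

lemma Connected.two_mul_card_le_distSum_of_degree_eq_one (hG : G.Connected) (huw : G.Adj u w)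
    (hu : G.degree u = 1) (hw : ¬ G.IsUniversal w) : 2 * card V ≤ G.distSum u + 2 := by
  obtain ⟨z, hwz, hz⟩ : ∃ z, w ≠ z ∧ ¬ G.Adj w z := by
    simpa [IsUniversal] using hw
  have := card_lt_univ_of_notMem (s := insert w (G.neighborFinset w)) (x := z)
    (by simpa [Ne.symm hwz] using hz)
  have := hG.three_mul_card_le_distSum_of_degree_eq_one huw hu
  omega

lemma Connected.three_mul_card_le_distSum_of_degree_le_three (hG : G.Connected)
    (huw : G.Adj u w) (hu : G.degree u = 1) (hw : G.degree w ≤ 3) :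
    3 * card V ≤ G.distSum u + 7 := by
  have := card_insert_le w (G.neighborFinset w)
  have := hG.three_mul_card_le_distSum_of_degree_eq_one huw hu
  rw [card_neighborFinset_eq_degree] at *
  omega

lemma degree_le_degree_induce_compl_singleton_add_one (w : ({u}ᶜ : Set V)) :
    G.degree w ≤ (G.induce {u}ᶜ).degree w + 1 := by
  rw [← card_neighborFinset_eq_degree, ← card_neighborFinset_eq_degree,
    ← card_map (.subtype (· ∈ ({u}ᶜ : Set V))), map_neighborFinset_induce]
  calc #(G.neighborFinset w) ≤ #(insert u (G.neighborFinset w ∩ ({u}ᶜ : Set V).toFinset)) := by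
        refine card_le_card fun x hx => ?_
        by_cases hxu : x = u
        · simp [hxu]
        · simp [hx, hxu]
    _ ≤ _ := card_insert_le _ _

end Pendant

omit [DecidableEq V] in
lemma exists_degree_eq_one_of_not_forall_degree_eq_two [Nontrivial V] (hG : G.Connected)
    (hE : #G.edgeFinset = card V) (h2 : ¬ ∀ v, G.degree v = 2) : ∃ u, G.degree u = 1 := by
  by_contra! h1
  have hge (v : V) : 2 ≤ G.degree v := by
    have := hG.preconnected.degree_pos_of_nontrivial v
    have := h1 v
    omega
  have hsum : ∑ _v : V, 2 = ∑ v, G.degree v := by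
    rw [sum_degrees_eq_twice_card_edges, hE]; simp [mul_comm]
  exact h2 fun v => ((sum_eq_sum_iff_of_le fun v _ => hge v).mp hsum v (mem_univ v)).symm

namespace IsUniversal

variable {c : V} (hc : G.IsUniversal c)
include hc

lemma neighborFinset_eq : G.neighborFinset c = univ.erase c := by
  ext v
  simpa [eq_comm] using ⟨fun h => h.ne, fun h => hc h⟩

lemma card_edgeFinset_deleteIncidenceSet (hE : #G.edgeFinset = card V) :
    #(G.deleteIncidenceSet c).edgeFinset = 1 := by
  rw [SimpleGraph.card_edgeFinset_deleteIncidenceSet, hE, ← card_neighborFinset_eq_degree,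
    hc.neighborFinset_eq, card_erase_of_mem (mem_univ c), card_univ]
  have := card_pos_iff.mpr ⟨c⟩
  omega

lemma degree_le_two (hE : #G.edgeFinset = card V) {v : V} (hv : v ≠ c) : G.degree v ≤ 2 := by
  have hinj : #((G.neighborFinset v).erase c) ≤ #(G.deleteIncidenceSet c).edgeFinset := by
    refine card_le_card_of_injOn (fun x => s(v, x)) (fun x hx => ?_) fun x _ y _ h => ?_
    · rw [mem_coe, mem_erase, mem_neighborFinset] at hx
      simp [deleteIncidenceSet_adj, hx.1, hx.2, hv]
    · exact Sym2.congr_right.mp h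
  rw [hc.card_edgeFinset_deleteIncidenceSet hE] at hinj
  have := pred_card_le_card_erase (s := G.neighborFinset v) (a := c)
  rw [card_neighborFinset_eq_degree] at this
  omega

lemma exists_adj_iff (hE : #G.edgeFinset = card V) :
    ∃ x y, x ≠ c ∧ y ≠ c ∧ G.Adj x y ∧
      ∀ a b, G.Adj a b ↔ a ≠ b ∧ (a = c ∨ b = c ∨ s(a, b) = s(x, y)) := by
  obtain ⟨e, he⟩ := card_eq_one.mp (hc.card_edgeFinset_deleteIncidenceSet hE)
  induction e using Sym2.ind with | _ x y => ?_
  have hdel (a b : V) : (G.deleteIncidenceSet c).Adj a b ↔ s(a, b) = s(x, y) := by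
    rw [← mem_edgeSet, ← mem_edgeFinset, he, mem_singleton]
  obtain ⟨hxy, hxc, hyc⟩ := deleteIncidenceSet_adj.mp ((hdel x y).mpr rfl)
  refine ⟨x, y, hxc, hyc, hxy, fun a b => ?_⟩
  by_cases hac : a = c
  · subst hac
    simpa using ⟨Adj.ne, fun h => hc h⟩
  by_cases hbc : b = c
  · subst hbc
    simpa [adj_comm] using ⟨Adj.ne, fun h => (hc (Ne.symm h)).symm⟩
  rw [← hdel, deleteIncidenceSet_adj]
  have : G.Adj a b → a ≠ b := Adj.ne
  tauto

end IsUniversal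

lemma degree_le_three_of_induce_compl_singleton {u w : V} (huw : G.Adj u w)
    (hw : ¬ G.IsUniversal w)
    (hE : #(G.induce {u}ᶜ).edgeFinset = card ({u}ᶜ : Set V))
    (h : (∃ c, (G.induce {u}ᶜ).IsUniversal c) ∨ ∀ v, (G.induce {u}ᶜ).degree v = 2) :
    G.degree w ≤ 3 := by
  have hdeg : (G.induce {u}ᶜ).degree ⟨w, huw.ne'⟩ ≤ 2 := by
    rcases h with ⟨c, hc⟩ | h
    · refine hc.degree_le_two hE ?_
      rintro rfl
      exact hw (isUniversal_of_isUniversal_induce_compl_singleton huw hc)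
    · exact (h _).le
  have : G.degree w ≤ (G.induce {u}ᶜ).degree ⟨w, huw.ne'⟩ + 1 :=
    degree_le_degree_induce_compl_singleton_add_one ⟨w, huw.ne'⟩
  omega

theorem Connected.two_mul_card_sq_le_totalDistSum (hG : G.Connected)
    (hE : #G.edgeFinset = card V) (h5 : 5 ≤ card V) (hU : ∀ c, ¬ G.IsUniversal c)
    (h2 : ¬ ∀ v, G.degree v = 2) : 2 * card V ^ 2 ≤ G.totalDistSum + 2 * card V + 8 := by
  induction hn : card V using Nat.strong_induction_on generalizing V with
  | _ n ih =>
  have : Nontrivial V := Fintype.one_lt_card_iff_nontrivial.mp (by omega)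
  obtain ⟨u, hu⟩ := exists_degree_eq_one_of_not_forall_degree_eq_two hG hE h2
  obtain ⟨w, huw⟩ := (G.degree_pos_iff_exists_adj u).mp (by omega)
  have hsub : (G.neighborSet u).Subsingleton := by
    rw [← coe_neighborFinset, neighborFinset_eq_singleton_of_degree_eq_one huw hu, coe_singleton]
    exact Set.subsingleton_singleton
  obtain ⟨m, hm⟩ : ∃ m, card ({u}ᶜ : Set V) = m := ⟨_, rfl⟩
  have hmn : m + 1 = n := by
    have := card_pos_iff.mpr ⟨u⟩
    simp only [← hm, ← hn, Fintype.card_compl_set, Set.card_singleton]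
    omega
  have hH : (G.induce {u}ᶜ).Connected := hG.induce_compl_singleton_of_degree_eq_one hu
  have hEH : #(G.induce {u}ᶜ).edgeFinset = card ({u}ᶜ : Set V) := by
    rw [card_edgeFinset_induce_compl_singleton, card_edgeFinset_deleteIncidenceSet, hE, hu]
    omega
  have hsplit := hG.totalDistSum_eq_of_subsingleton_neighborSet hsub
  have ht := hG.two_mul_card_le_distSum_of_degree_eq_one huw hu (hU w)
  have hsq : n ^ 2 = m ^ 2 + 2 * m + 1 := by rw [← hmn]; ring
  by_cases hA : 5 ≤ m ∧ (∀ c, ¬ (G.induce {u}ᶜ).IsUniversal c) ∧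
      ¬ ∀ v, (G.induce {u}ᶜ).degree v = 2
  · have := ih m (by omega) hH hEH (hm ▸ hA.1) hA.2.1 hA.2.2 hm
    omega
  have ht3 : 3 * n ≤ G.distSum u + 7 := by
    by_cases hm4 : m = 4
    · omega
    rw [← hn]
    refine hG.three_mul_card_le_distSum_of_degree_le_three huw hu
      (degree_le_three_of_induce_compl_singleton huw (hU w) hEH ?_)
    by_contra h
    obtain ⟨hU', h2'⟩ := not_or.mp h
    exact hA ⟨by omega, fun c hc => hU' ⟨c, hc⟩, h2'⟩
  have := hH.totalDistSum_add
  rw [hEH, hm] at this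
  omega

lemma IsUniversal.nonempty_iso_starPlus {n : ℕ} {G : SimpleGraph (Fin n)} [DecidableRel G.Adj]
    {c : Fin n} (hc : G.IsUniversal c) (hE : #G.edgeFinset = n) (hn : 3 ≤ n) :
    Nonempty (G ≃g starPlus n) := by
  obtain ⟨x, y, hxc, hyc, hxy, hadj⟩ := hc.exists_adj_iff (by rwa [Fintype.card_fin])
  obtain ⟨σ, hσ⟩ := Equiv.Perm.exists_extending_pair ![c, x, y]
    ![⟨0, by omega⟩, ⟨1, by omega⟩, ⟨2, by omega⟩]
    (by intro i j h; fin_cases i <;> fin_cases j <;> simp_all [eq_comm, hxy.ne])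
    (by intro i j h; fin_cases i <;> fin_cases j <;> simp_all [Fin.ext_iff])
  have hval {b : Fin n} {k : ℕ} (hb : (σ b).val = k) (a : Fin n) : (σ a).val = k ↔ a = b := by
    rw [← hb, ← Fin.ext_iff, σ.injective.eq_iff]
  have h0 : ∀ a, (σ a).val = 0 ↔ a = c := hval (congrArg Fin.val (hσ 0))
  have h1 : ∀ a, (σ a).val = 1 ↔ a = x := hval (congrArg Fin.val (hσ 1))
  have h2 : ∀ a, (σ a).val = 2 ↔ a = y := hval (congrArg Fin.val (hσ 2))
  refine ⟨⟨σ, fun {a b} => ?_⟩⟩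
  rw [hadj, Sym2.eq_iff]
  show σ a ≠ σ b ∧ _ ↔ _
  simp only [h0, h1, h2, σ.injective.ne_iff]

end SimpleGraph

open SimpleGraph

lemma starPlus_eq_starGraph_sup_edge {n : ℕ} (hn : 3 ≤ n) :
    starPlus n = SimpleGraph.starGraph ⟨0, by omega⟩ ⊔ edge ⟨1, by omega⟩ ⟨2, by omega⟩ := by
  ext a b
  simp only [starPlus, sup_adj, SimpleGraph.starGraph_adj, edge_adj, Fin.ext_iff]
  omega

lemma isUniversal_starPlus {n : ℕ} (hn : 3 ≤ n) : (starPlus n).IsUniversal ⟨0, by omega⟩ :=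
  fun _ hv => ⟨hv, Or.inl rfl⟩

lemma card_edgeFinset_starPlus {n : ℕ} (hn : 3 ≤ n) [Fintype (starPlus n).edgeSet] :
    #(starPlus n).edgeFinset = n := by
  classical
  have htree := (isTree_starGraph (⟨0, by omega⟩ : Fin n)).card_edgeFinset
  rw [Fintype.card_fin] at htree
  have hsup := card_edgeFinset_sup_edge (G := SimpleGraph.starGraph (⟨0, by omega⟩ : Fin n))
    (s := ⟨1, by omega⟩) (t := ⟨2, by omega⟩) (by simp) (by simp)
  rw [← Set.ncard_coe_finset, coe_edgeFinset] at hsup ⊢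
  rw [starPlus_eq_starGraph_sup_edge hn, hsup]
  omega

lemma totalDistSum_starPlus {n : ℕ} (hn : 3 ≤ n) :
    (starPlus n).totalDistSum + 4 * n = 2 * n ^ 2 := by
  classical
  have hc := isUniversal_starPlus hn
  have h := (Connected.of_isUniversal hc).totalDistSum_add
  have hzero : ∑ u, ∑ v, ((starPlus n).dist u v - 2) = 0 :=
    sum_eq_zero fun u _ => sum_eq_zero fun v _ => Nat.sub_eq_zero_of_le (hc.dist_le_two u v)
  rw [card_edgeFinset_starPlus hn, Fintype.card_fin, hzero] at h
  omega

lemma wienerIndex_eq_totalDistSum {n : ℕ} (G : SimpleGraph (Fin n)) :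
    wienerIndex G = (G.totalDistSum : ℝ) / 2 := by
  simp [wienerIndex, totalDistSum, distSum]

/-- A connected unicyclic graph of order `n ≥ 6` other than `S_n⁺` satisfies
`W(G) ≥ n² − n − 4 > W(S_n⁺) = n² − 2n`. -/
theorem stmt_8 {n : ℕ} (G : SimpleGraph (Fin n)) (hG : G.Connected)
    (huni : G.edgeSet.ncard = n) (hn : 6 ≤ n)
    (hns : ¬ Nonempty (G ≃g starPlus n)) :
    wienerIndex G ≥ (n : ℝ) ^ 2 - n - 4 ∧
    (n : ℝ) ^ 2 - n - 4 > wienerIndex (starPlus n) ∧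
    wienerIndex (starPlus n) = (n : ℝ) ^ 2 - 2 * n := by
  classical
  have hE : #G.edgeFinset = n := by rw [← Set.ncard_coe_finset, coe_edgeFinset, huni]
  have hG2 : 2 * n ^ 2 ≤ G.totalDistSum + 2 * n + 8 := by
    have hcard := Fintype.card_fin n
    by_cases h2 : ∀ v, G.degree v = 2
    · simpa [hcard] using hG.two_mul_card_sq_le_totalDistSum_of_forall_degree_eq_two h2 (by omega)
    · simpa [hcard] using hG.two_mul_card_sq_le_totalDistSum (by omega) (by omega)
        (fun c hc => hns (hc.nonempty_iso_starPlus hE (by omega))) h2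
  have hS := totalDistSum_starPlus (by omega : 3 ≤ n)
  have hn' : (6 : ℝ) ≤ n := by exact_mod_cast hn
  have hG2' : 2 * (n : ℝ) ^ 2 ≤ G.totalDistSum + 2 * n + 8 := by exact_mod_cast hG2
  have hS' : ((starPlus n).totalDistSum : ℝ) + 4 * n = 2 * (n : ℝ) ^ 2 := by exact_mod_cast hS
  rw [wienerIndex_eq_totalDistSum, wienerIndex_eq_totalDistSum]
  refine ⟨by linarith, by linarith, by linarith⟩
end

section
/- Let G be a connected simple graph of order n and let 1 ≥ α > β ≥ 0. Then ρ_{D_α}(G) ≥ ρ_{D_β}(G), with equality if and only if G is transmission regular (i.e., Tr(u) is the same for all vertices u of G). -/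
open Matrix

/-! `D_α(G) - D_β(G) = (α - β) D^L(G)`, where `D^L = Tr(G) - D(G)` is the distance Laplacian, whose
quadratic form `xᵀ D^L x = ½ ∑_{u,v} d_{uv} (x_u - x_v)²` is nonnegative. Evaluating the Rayleigh
quotient of `D_α` at a top eigenvector `x` of `D_β` gives
`ρ_{D_α} ≥ ρ_{D_β} + (α - β) xᵀ D^L x / xᵀ x`. Equality forces `xᵀ D^L x = 0`, hence `x` constant
(distinct vertices of a connected graph are at positive distance), and then every row sum
`Tr(u)` of `D_β` equals `ρ_{D_β}`. Conversely, if every `Tr(u) = k`, the all-ones vector is an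
eigenvector of each `D_γ` with eigenvalue `k`, and for `γ ≤ 1` the off-diagonal entries
`(1 - γ) d_{uv}` are nonnegative, so Gershgorin's theorem bounds every eigenvalue by the row
sum `k`. -/

open scoped MatrixOrder

namespace Matrix

variable {ι : Type*} [Fintype ι]

theorem hasEigenvalue_toLin'_iff [DecidableEq ι] (M : Matrix ι ι ℝ) {μ : ℝ} :
    Module.End.HasEigenvalue M.toLin' μ ↔ ∃ x ≠ 0, M *ᵥ x = μ • x := by
  simp [Module.End.hasEigenvalue_iff, Submodule.ne_bot_iff, and_comm]

theorem le_of_hasEigenvalue_of_offDiag_nonneg [DecidableEq ι] {A : Matrix ι ι ℝ} {k : ℝ}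
    (hA : ∀ i j, i ≠ j → 0 ≤ A i j) (hrow : ∀ i, ∑ j, A i j = k) {μ : ℝ}
    (hμ : Module.End.HasEigenvalue A.toLin' μ) : μ ≤ k := by
  obtain ⟨i, hi⟩ := eigenvalue_mem_ball hμ
  rw [Metric.mem_closedBall, Real.dist_eq] at hi
  have hradius : ∑ j ∈ Finset.univ.erase i, ‖A i j‖ = k - A i i := by
    rw [← hrow i, ← Finset.add_sum_erase _ _ (Finset.mem_univ i), add_sub_cancel_left]
    exact Finset.sum_congr rfl fun j hj =>
      Real.norm_of_nonneg (hA i j (Finset.ne_of_mem_erase hj).symm)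
  linarith [le_abs_self (μ - A i i)]

theorem sum_row_eq_of_mulVec_eq_smul {A : Matrix ι ι ℝ} {x : ι → ℝ} {μ : ℝ}
    (hx : A *ᵥ x = μ • x) (hx0 : x ≠ 0) (hconst : ∀ i j, x i = x j) (i : ι) :
    ∑ j, A i j = μ := by
  obtain ⟨j, hj⟩ := Function.ne_iff.mp hx0
  have := congrFun hx i
  simp only [mulVec, dotProduct, Pi.smul_apply, smul_eq_mul, hconst _ j] at this
  exact mul_right_cancel₀ hj (by rwa [Finset.sum_mul])

theorem two_mul_dotProduct_diagonal_sum_sub_mulVec [DecidableEq ι] {W : Matrix ι ι ℝ}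
    (hW : Wᵀ = W) (x : ι → ℝ) :
    2 * (x ⬝ᵥ ((diagonal (fun i => ∑ j, W i j) - W) *ᵥ x)) =
      ∑ i, ∑ j, W i j * (x i - x j) ^ 2 := by
  have hswap : ∑ i, ∑ j, W i j * x j ^ 2 = ∑ i, ∑ j, W i j * x i ^ 2 := by
    rw [Finset.sum_comm]
    exact Finset.sum_congr rfl fun i _ => Finset.sum_congr rfl fun j _ => by
      rw [show W j i = W i j from congrFun (congrFun hW i) j]
  calc 2 * (x ⬝ᵥ ((diagonal (fun i => ∑ j, W i j) - W) *ᵥ x))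
      = ∑ i, ∑ j, W i j * x i ^ 2 + ∑ i, ∑ j, W i j * x j ^ 2
          - 2 * ∑ i, ∑ j, W i j * (x i * x j) := by
        have hdiag : x ⬝ᵥ (diagonal (fun i => ∑ j, W i j) *ᵥ x) =
            ∑ i, ∑ j, W i j * x i ^ 2 := by
          simp only [dotProduct, mulVec_diagonal, Finset.sum_mul, Finset.mul_sum]
          exact Finset.sum_congr rfl fun i _ => Finset.sum_congr rfl fun j _ => by ring
        have hoff : x ⬝ᵥ (W *ᵥ x) = ∑ i, ∑ j, W i j * (x i * x j) := by
          simp only [dotProduct, mulVec, Finset.mul_sum]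
          exact Finset.sum_congr rfl fun i _ => Finset.sum_congr rfl fun j _ => by ring
        rw [sub_mulVec, dotProduct_sub, hdiag, hoff, hswap]
        ring
    _ = ∑ i, ∑ j, W i j * (x i - x j) ^ 2 := by
        simp only [Finset.mul_sum, ← Finset.sum_add_distrib, ← Finset.sum_sub_distrib]
        exact Finset.sum_congr rfl fun i _ => Finset.sum_congr rfl fun j _ => by ring

end Matrix

section SpecRadius

variable {n : ℕ} {M : Matrix (Fin n) (Fin n) ℝ}

theorem specRadius_eq_sSup_spectrum (M : Matrix (Fin n) (Fin n) ℝ) :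
    specRadius M = sSup (spectrum ℝ M) := by
  simp only [specRadius, Module.End.hasEigenvalue_iff_mem_spectrum, Matrix.spectrum_toLin']
  rfl

theorem specRadius_eq_of_offDiag_nonneg [Nonempty (Fin n)] {k : ℝ}
    (hM : ∀ i j, i ≠ j → 0 ≤ M i j) (hrow : ∀ i, ∑ j, M i j = k) : specRadius M = k := by
  refine IsGreatest.csSup_eq ⟨(Matrix.hasEigenvalue_toLin'_iff M).mpr ⟨1, one_ne_zero, ?_⟩,
    fun μ hμ => Matrix.le_of_hasEigenvalue_of_offDiag_nonneg hM hrow hμ⟩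
  ext i
  simp [mulVec, dotProduct, hrow]

theorem Matrix.IsHermitian.exists_mulVec_eq_specRadius_smul [Nonempty (Fin n)]
    (hM : M.IsHermitian) : ∃ x ≠ 0, M *ᵥ x = specRadius M • x := by
  refine (Matrix.hasEigenvalue_toLin'_iff M).mp
    (Module.End.hasEigenvalue_iff_mem_spectrum.mpr ?_)
  rw [Matrix.spectrum_toLin', specRadius_eq_sSup_spectrum]
  exact Set.Nonempty.csSup_mem ⟨_, hM.eigenvalues_mem_spectrum_real (Classical.arbitrary _)⟩
    Matrix.finite_real_spectrum

theorem Matrix.IsHermitian.dotProduct_mulVec_le_specRadius_mul (hM : M.IsHermitian)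
    (x : Fin n → ℝ) : x ⬝ᵥ (M *ᵥ x) ≤ specRadius M * (x ⬝ᵥ x) := by
  have hle : M ≤ algebraMap ℝ _ (specRadius M) := by
    refine le_algebraMap_of_spectrum_le (fun μ hμ => ?_) hM
    rw [specRadius_eq_sSup_spectrum]
    exact le_csSup Matrix.finite_real_spectrum.bddAbove hμ
  simpa [Algebra.algebraMap_eq_smul_one, sub_mulVec, smul_mulVec, dotProduct_sub,
    dotProduct_smul] using (Matrix.le_iff.mp hle).dotProduct_mulVec_nonneg x

end SpecRadius

section Graph

variable {n : ℕ} (G : SimpleGraph (Fin n))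

noncomputable def distLaplacian : Matrix (Fin n) (Fin n) ℝ :=
  Matrix.diagonal (transmission G) - distMatrix G

theorem distMatrix_transpose : (distMatrix G)ᵀ = distMatrix G := by
  ext u v
  simp [distMatrix, SimpleGraph.dist_comm]

theorem Dalpha_isHermitian (γ : ℝ) : (Dalpha γ G).IsHermitian := by
  simp [Matrix.IsHermitian, Dalpha, Matrix.transpose_add, distMatrix_transpose]

theorem Dalpha_apply_of_ne (γ : ℝ) {u v : Fin n} (huv : u ≠ v) :
    Dalpha γ G u v = (1 - γ) * G.dist u v := by
  simp [Dalpha, distMatrix, huv]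

theorem sum_Dalpha_apply (γ : ℝ) (u : Fin n) : ∑ v, Dalpha γ G u v = transmission G u := by
  simp only [Dalpha, Matrix.add_apply, Matrix.smul_apply, diagonal_apply, transmission,
    smul_eq_mul, mul_ite, mul_zero, distMatrix, Finset.sum_add_distrib, Finset.sum_ite_eq,
    Finset.mem_univ, ↓reduceIte, ← Finset.mul_sum]
  ring

theorem Dalpha_eq_add_smul_distLaplacian (α β : ℝ) :
    Dalpha α G = Dalpha β G + (α - β) • distLaplacian G := by
  ext u v
  simp only [Dalpha, distLaplacian, Matrix.add_apply, Matrix.smul_apply, Matrix.sub_apply,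
    smul_eq_mul]
  ring

theorem two_mul_dotProduct_distLaplacian_mulVec (x : Fin n → ℝ) :
    2 * (x ⬝ᵥ (distLaplacian G *ᵥ x)) = ∑ u, ∑ v, (G.dist u v : ℝ) * (x u - x v) ^ 2 :=
  Matrix.two_mul_dotProduct_diagonal_sum_sub_mulVec (distMatrix_transpose G) x

theorem dotProduct_distLaplacian_mulVec_nonneg (x : Fin n → ℝ) :
    0 ≤ x ⬝ᵥ (distLaplacian G *ᵥ x) := by
  have := two_mul_dotProduct_distLaplacian_mulVec G x
  have : 0 ≤ ∑ u, ∑ v, (G.dist u v : ℝ) * (x u - x v) ^ 2 := by positivity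
  linarith

theorem SimpleGraph.Connected.eq_of_dotProduct_distLaplacian_mulVec_eq_zero
    (hG : G.Connected) {x : Fin n → ℝ} (hx : x ⬝ᵥ (distLaplacian G *ᵥ x) = 0) (u v : Fin n) :
    x u = x v := by
  have hsum : ∑ u, ∑ v, (G.dist u v : ℝ) * (x u - x v) ^ 2 = 0 := by
    rw [← two_mul_dotProduct_distLaplacian_mulVec, hx, mul_zero]
  have hterm := congrFun ((Fintype.sum_eq_zero_iff_of_nonneg fun _ => by positivity).mp
    (congrFun ((Fintype.sum_eq_zero_iff_of_nonneg fun _ => by positivity).mp hsum) u)) v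
  rcases eq_or_ne u v with rfl | huv
  · rfl
  · have hdist : (G.dist u v : ℝ) ≠ 0 := by exact_mod_cast (hG.pos_dist_of_ne huv).ne'
    simpa [hdist, sub_eq_zero] using hterm

theorem specRadius_Dalpha_of_transmission_eq [Nonempty (Fin n)] {γ k : ℝ} (hγ : γ ≤ 1)
    (hk : ∀ u, transmission G u = k) : specRadius (Dalpha γ G) = k :=
  specRadius_eq_of_offDiag_nonneg
    (fun u v huv => by
      rw [Dalpha_apply_of_ne G γ huv]
      exact mul_nonneg (by linarith) (by positivity))
    (fun u => by rw [sum_Dalpha_apply, hk])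

end Graph

theorem stmt_9_general {n : ℕ} (G : SimpleGraph (Fin n)) (hG : G.Connected)
    (α β : ℝ) (hβα : β < α) (hα1 : α ≤ 1) :
    specRadius (Dalpha α G) ≥ specRadius (Dalpha β G) ∧
    (specRadius (Dalpha α G) = specRadius (Dalpha β G) ↔
      ∀ u v : Fin n, transmission G u = transmission G v) := by
  have : Nonempty (Fin n) := hG.nonempty
  obtain ⟨x, hx0, hx⟩ := (Dalpha_isHermitian G β).exists_mulVec_eq_specRadius_smul
  have hN : 0 < x ⬝ᵥ x := lt_of_le_of_ne (by simpa using dotProduct_star_self_nonneg x)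
    (Ne.symm (dotProduct_self_eq_zero.not.mpr hx0))
  have hq := dotProduct_distLaplacian_mulVec_nonneg G x
  have key : specRadius (Dalpha β G) * (x ⬝ᵥ x) + (α - β) * (x ⬝ᵥ (distLaplacian G *ᵥ x)) ≤
      specRadius (Dalpha α G) * (x ⬝ᵥ x) := by
    calc _ = x ⬝ᵥ (Dalpha α G *ᵥ x) := by
          rw [Dalpha_eq_add_smul_distLaplacian G α β, add_mulVec, smul_mulVec, hx,
            dotProduct_add, dotProduct_smul, dotProduct_smul, smul_eq_mul, smul_eq_mul]
      _ ≤ _ := (Dalpha_isHermitian G α).dotProduct_mulVec_le_specRadius_mul x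
  refine ⟨le_of_mul_le_mul_right (by nlinarith) hN, fun heq => ?_, fun hreg => ?_⟩
  · have hq0 : x ⬝ᵥ (distLaplacian G *ᵥ x) = 0 := by
      rw [heq] at key
      nlinarith
    have htr (u : Fin n) : transmission G u = specRadius (Dalpha β G) := by
      rw [← sum_Dalpha_apply G β]
      exact Matrix.sum_row_eq_of_mulVec_eq_smul hx hx0
        (hG.eq_of_dotProduct_distLaplacian_mulVec_eq_zero G hq0) u
    exact fun u v => (htr u).trans (htr v).symm
  · obtain ⟨u₀⟩ := hG.nonempty
    rw [specRadius_Dalpha_of_transmission_eq G hα1 (hreg · u₀),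
      specRadius_Dalpha_of_transmission_eq G (hβα.le.trans hα1) (hreg · u₀)]

/-- For `1 ≥ α > β ≥ 0`, `ρ_{D_α}(G) ≥ ρ_{D_β}(G)`, with equality iff `G` is
transmission regular. -/
theorem stmt_9 {n : ℕ} (G : SimpleGraph (Fin n)) (hG : G.Connected)
    (α β : ℝ) (hβ0 : 0 ≤ β) (hβα : β < α) (hα1 : α ≤ 1) :
    specRadius (Dalpha α G) ≥ specRadius (Dalpha β G) ∧
    (specRadius (Dalpha α G) = specRadius (Dalpha β G) ↔
      ∀ u v : Fin n, transmission G u = transmission G v) :=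
  stmt_9_general G hG α β hβα hα1
end

section
/- Let G be a tree of order n ≥ 4 that is not isomorphic to the star S_n. Then the distance signless Laplacian spectral radius satisfies ρ_{D^Q}(G) > (5n − 8 + √(9(n−2)² + 4(n−1)))/2. -/
open Matrix

/-!
Testing the Rayleigh quotient of `D^Q(G)` at the all-ones vector gives
`ρ_{D^Q}(G) ≥ 2 Σ_{u,v} d_{uv} / n`. In a connected graph two distinct non-adjacent vertices are
at distance at least `2`, so `Σ_{u,v} d_{uv} ≥ 2n(n-1) - 2|E| + N`, where `N` counts the ordered
pairs at distance at least `3`. A tree that is not a star has an edge `ab` whose ends both have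
further neighbours; deleting it splits the vertices into the sides `A ∋ a` and `B ∋ b`, and every
vertex of `A \ {a}` is at distance at least `3` from every vertex of `B \ {b}`. Hence
`N ≥ 2(|A|-1)(|B|-1) ≥ 2(n-3)`, so `Σ_{u,v} d_{uv} ≥ 2n² - 2n - 4` and `ρ_{D^Q}(G) ≥ 4n - 6`, while
`√(9(n-2)² + 4(n-1)) < 3n - 5`.
-/

open Module.End in
lemma rayleigh_le_specRadius {n : ℕ} {M : Matrix (Fin n) (Fin n) ℝ} (hM : M.IsHermitian)
    {x : Fin n → ℝ} (hx : x ≠ 0) : x ⬝ᵥ (M *ᵥ x) / (x ⬝ᵥ x) ≤ specRadius M := by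
  let E := EuclideanSpace ℝ (Fin n)
  let xE : E := WithLp.toLp 2 x
  have hxE : xE ≠ 0 := fun h => hx (congrArg WithLp.ofLp h)
  have : Nontrivial E := ⟨⟨xE, 0, hxE⟩⟩
  let T : E →ₗ[ℝ] E := Matrix.toEuclideanLin M
  have hT : T.IsSymmetric := Matrix.isSymmetric_toEuclideanLin_iff.mpr hM
  have hrange : BddAbove (Set.range fun y : {y : E // y ≠ 0} =>
      RCLike.re (inner ℝ (T y) (y : E) : ℝ) / ‖(y : E)‖ ^ 2) := by
    refine ⟨‖LinearMap.toContinuousLinearMap T‖, ?_⟩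
    rintro _ ⟨y, rfl⟩
    exact (le_abs_self _).trans ((LinearMap.toContinuousLinearMap T).rayleighQuotient_le_norm y)
  have hbdd : BddAbove {μ | HasEigenvalue (Matrix.toLin' M) μ} :=
    (finite_hasEigenvalue _).bddAbove
  have hsup : HasEigenvalue (Matrix.toLin' M)
      (⨆ y : {y : E // y ≠ 0}, RCLike.re (inner ℝ (T y) (y : E) : ℝ) / ‖(y : E)‖ ^ 2) := by
    rw [hasEigenvalue_iff_mem_spectrum, Matrix.spectrum_toLin', ← Matrix.spectrum_toLpLin 2]
    exact hT.hasEigenvalue_iSup_of_finiteDimensional.mem_spectrum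
  refine le_trans ?_ (le_csSup hbdd hsup)
  convert le_ciSup hrange ⟨xE, hxE⟩ using 1
  rw [← real_inner_self_eq_norm_sq, EuclideanSpace.inner_eq_star_dotProduct,
    EuclideanSpace.inner_eq_star_dotProduct]
  simp only [T, xE, RCLike.re_to_real, star_trivial]
  rfl

namespace SimpleGraph

open Finset

noncomputable def farPairs {V : Type*} [Fintype V] (G : SimpleGraph V) : Finset (V × V) :=
  {p | 3 ≤ G.dist p.1 p.2}

variable {V : Type*} {G : SimpleGraph V} {a b : V}

lemma Connected.reachable_deleteEdges_or (hG : G.Connected) (a b v : V) :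
    (G.deleteEdges {s(a, b)}).Reachable v a ∨ (G.deleteEdges {s(a, b)}).Reachable v b := by
  obtain ⟨p⟩ := hG.preconnected v a
  -- `induction` must be free to vary the endpoint of the walk, so it is decoupled from `a`
  suffices h : ∀ {u c : V}, G.Walk u c → c = a →
      (G.deleteEdges {s(a, b)}).Reachable u a ∨ (G.deleteEdges {s(a, b)}).Reachable u b from
    h p rfl
  intro u c p hc
  induction p with
  | nil => exact Or.inl (hc ▸ .rfl)
  | @cons u x _ hux _ ih =>
    by_cases he : s(u, x) = s(a, b)
    · rcases Sym2.eq_iff.mp he with ⟨rfl, -⟩ | ⟨rfl, -⟩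
      · exact Or.inl .rfl
      · exact Or.inr .rfl
    · have hadj : (G.deleteEdges {s(a, b)}).Adj u x := by simp [hux, he]
      exact (ih hc).imp hadj.reachable.trans hadj.reachable.trans

lemma IsBridge.eq_of_adj_of_reachable_deleteEdges {v w : V} (hab : G.IsBridge s(a, b))
    (hv : (G.deleteEdges {s(a, b)}).Reachable v a) (hw : (G.deleteEdges {s(a, b)}).Reachable w b)
    (hvw : G.Adj v w) : v = a ∧ w = b := by
  by_cases he : s(v, w) = s(a, b)
  · rcases Sym2.eq_iff.mp he with h | ⟨rfl, -⟩
    · exact h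
    · exact absurd hv.symm hab
  · have hadj : (G.deleteEdges {s(a, b)}).Adj v w := by simp [hvw, he]
    exact absurd (hv.symm.trans (hadj.reachable.trans hw)) hab

lemma IsBridge.three_le_dist {v w : V} (hG : G.Connected) (hab : G.IsBridge s(a, b))
    (hv : (G.deleteEdges {s(a, b)}).Reachable v a) (hva : v ≠ a)
    (hw : (G.deleteEdges {s(a, b)}).Reachable w b) (hwb : w ≠ b) : 3 ≤ G.dist v w := by
  have hvw : v ≠ w := by
    rintro rfl
    exact hab (hv.symm.trans hw)
  have hnadj : ¬ G.Adj v w := fun h => hva (hab.eq_of_adj_of_reachable_deleteEdges hv hw h).1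
  have hcommon : G.commonNeighbors v w = ∅ := by
    refine Set.eq_empty_iff_forall_notMem.mpr fun x hx => ?_
    obtain ⟨hvx, hwx⟩ := (G.mem_commonNeighbors).mp hx
    rcases hG.reachable_deleteEdges_or a b x with hxa | hxb
    · exact hwb (hab.eq_of_adj_of_reachable_deleteEdges hxa hw hwx.symm).2
    · exact hva (hab.eq_of_adj_of_reachable_deleteEdges hv hxb hvx).1
  have h := two_lt_edist_iff.mpr ⟨hvw, hnadj, hcommon⟩
  rw [← (hG.preconnected v w).coe_dist_eq_edist] at h
  exact_mod_cast h

lemma IsTree.two_mul_card_sub_three_le_card_farPairs [Fintype V] (hT : G.IsTree) {a' b' : V}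
    (hab : G.Adj a b) (ha' : G.Adj a a') (ha'b : a' ≠ b) (hb' : G.Adj b b') (hb'a : b' ≠ a) :
    2 * (Fintype.card V - 3) ≤ #G.farPairs := by
  classical
  have hbr : G.IsBridge s(a, b) := isAcyclic_iff_forall_adj_isBridge.mp hT.isAcyclic hab
  set G' := G.deleteEdges {s(a, b)}
  set A : Finset V := {v | G'.Reachable v a}
  set B : Finset V := {v | ¬ G'.Reachable v a}
  have hAB : #A + #B = Fintype.card V := card_filter_add_card_filter_not _
  have hB : ∀ v ∈ B, G'.Reachable v b := fun v hv =>
    (hT.connected.reachable_deleteEdges_or a b v).resolve_left (mem_filter.mp hv).2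
  have ha'A : a' ∈ A.erase a := by
    have : G'.Adj a' a := by simp [G', ha'.symm, ha'b, ha'.ne']
    simpa [A, ha'.ne'] using this.reachable
  have hb'B : b' ∈ B.erase b := by
    have : G'.Adj b' b := by simp [G', hb'.symm, hb'a, hb'.ne']
    simp only [B, mem_erase, mem_filter, mem_univ, true_and]
    exact ⟨hb'.ne', fun h => hbr (h.symm.trans this.reachable)⟩
  have hfar : ∀ v ∈ A.erase a, ∀ w ∈ B.erase b, 3 ≤ G.dist v w := by
    intro v hv w hw
    obtain ⟨hva, hvA⟩ := mem_erase.mp hv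
    obtain ⟨hwb, hwB⟩ := mem_erase.mp hw
    exact hbr.three_le_dist hT.connected (mem_filter.mp hvA).2 hva (hB w hwB) hwb
  have hsub : A.erase a ×ˢ B.erase b ∪ B.erase b ×ˢ A.erase a ⊆ G.farPairs := by
    rintro ⟨v, w⟩ hvw
    simp only [farPairs, mem_union, mem_product, mem_filter, mem_univ, true_and] at hvw ⊢
    rcases hvw with ⟨hv, hw⟩ | ⟨hv, hw⟩
    · exact hfar v hv w hw
    · exact G.dist_comm ▸ hfar w hw v hv
  have hdisj : Disjoint (A.erase a ×ˢ B.erase b) (B.erase b ×ˢ A.erase a) :=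
    disjoint_product.mpr (Or.inl (disjoint_filter_filter_not _ _ _ |>.mono
      (erase_subset _ _) (erase_subset _ _)))
  have hcard := card_le_card hsub
  rw [card_union_of_disjoint hdisj, card_product, card_product] at hcard
  have hA := card_erase_add_one (show a ∈ A by simp [A])
  have hB := card_erase_add_one (show b ∈ B by simpa [B] using fun h => hbr h.symm)
  have hp := card_pos.mpr ⟨a', ha'A⟩
  have hq := card_pos.mpr ⟨b', hb'B⟩
  have : #(A.erase a) + #(B.erase b) ≤ #(A.erase a) * #(B.erase b) + 1 := by nlinarith
  rw [mul_comm #(B.erase b)] at hcard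
  omega

lemma Connected.sum_sum_dist_ge [Fintype V] [DecidableRel G.Adj] (hG : G.Connected) :
    2 * (Fintype.card V : ℝ) ^ 2 - 2 * Fintype.card V - 2 * #G.edgeFinset
      + #G.farPairs ≤ ∑ u, ∑ v, (G.dist u v : ℝ) := by
  classical
  have hpoint : ∀ u v, (2 - (if u = v then 2 else 0) - (if G.Adj u v then 1 else 0)
      + (if 3 ≤ G.dist u v then 1 else 0) : ℝ) ≤ G.dist u v := by
    intro u v
    by_cases huv : u = v
    · simp [huv]
    by_cases hadj : G.Adj u v
    · norm_num [huv, hadj, dist_eq_one_iff_adj.mpr hadj]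
    have h2 : (2 : ℝ) ≤ G.dist u v := by exact_mod_cast hG.one_lt_dist_of_ne_of_not_adj huv hadj
    split_ifs with h3
    · have : (3 : ℝ) ≤ G.dist u v := by exact_mod_cast h3
      linarith
    · linarith
  have hadj : ∑ u, ∑ v, (if G.Adj u v then 1 else 0 : ℝ) = 2 * #G.edgeFinset := by
    have hdeg (u : V) : ∑ v, (if G.Adj u v then 1 else 0 : ℝ) = G.degree u := by
      rw [sum_boole, ← card_neighborFinset_eq_degree, neighborFinset_eq_filter]
    simp_rw [hdeg]
    exact_mod_cast G.sum_degrees_eq_twice_card_edges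
  have hfar : ∑ u, ∑ v, (if 3 ≤ G.dist u v then 1 else 0 : ℝ) = #G.farPairs := by
    rw [← Fintype.sum_prod_type' (f := fun u v => (if 3 ≤ G.dist u v then 1 else 0 : ℝ)),
      sum_boole]
    rfl
  calc _ = ∑ u, ∑ v, (2 - (if u = v then 2 else 0) - (if G.Adj u v then 1 else 0)
        + (if 3 ≤ G.dist u v then 1 else 0) : ℝ) := by
        simp only [sum_add_distrib, sum_sub_distrib, hadj, hfar, sum_const, card_univ,
          nsmul_eq_mul, sum_ite_eq, mem_univ, if_true]
        ring
    _ ≤ _ := sum_le_sum fun u _ => sum_le_sum fun v _ => hpoint u v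

end SimpleGraph

lemma nonempty_iso_starGraph {n : ℕ} (c : Fin n) :
    Nonempty (SimpleGraph.starGraph c ≃g starGraph n) := by
  have : NeZero n := ⟨c.pos.ne'⟩
  have hc (w : Fin n) : (Equiv.swap c 0 w).val = 0 ↔ w = c := by
    rw [← Fin.val_zero n, Fin.val_inj, Equiv.swap_apply_eq_iff, Equiv.swap_apply_right]
  refine ⟨⟨Equiv.swap c 0, fun {u v} => ?_⟩⟩
  simp only [starGraph, hc, SimpleGraph.starGraph_adj, ne_eq, EmbeddingLike.apply_eq_iff_eq]

open Finset in
lemma exists_adj_adj_adj_of_not_iso_starGraph {n : ℕ} {G : SimpleGraph (Fin n)}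
    (hT : G.IsTree) (hn : 3 ≤ n) (hns : ¬ Nonempty (G ≃g starGraph n)) :
    ∃ a b a' b', G.Adj a b ∧ G.Adj a a' ∧ a' ≠ b ∧ G.Adj b b' ∧ b' ≠ a := by
  classical
  obtain ⟨c, hc⟩ : ∃ c, 2 ≤ G.degree c := by
    by_contra! h
    have hsum := G.sum_degrees_eq_twice_card_edges
    have hE := hT.card_edgeFinset
    have : ∑ v, G.degree v ≤ ∑ _v : Fin n, 1 := sum_le_sum fun v _ => by have := h v; omega
    simp only [sum_const, card_univ, Fintype.card_fin, smul_eq_mul, mul_one] at this hE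
    omega
  by_cases hfar : ∃ v, 2 ≤ G.dist c v
  · obtain ⟨v, hv⟩ := hfar
    obtain ⟨p, hp⟩ := hT.connected.exists_walk_length_eq_dist c v
    match p, hp with
    | .cons (v := x) hcx (.cons (v := y) hxy q), hp =>
      have hyc : y ≠ c := by
        rintro rfl
        have := G.dist_le q
        simp only [SimpleGraph.Walk.length_cons] at hp
        omega
      obtain ⟨a', ha', ha'x⟩ := exists_mem_ne (s := G.neighborFinset c)
        (by rwa [G.card_neighborFinset_eq_degree]) x
      exact ⟨c, x, a', y, hcx, (G.mem_neighborFinset c a').mp ha', ha'x, hxy, hyc⟩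
    | .nil, _ => simp at hv
    | .cons hcv .nil, _ => simp [SimpleGraph.dist_eq_one_iff_adj.mpr hcv] at hv
  · have hnear (v : Fin n) (hvc : v ≠ c) : G.Adj c v := by
      have := hT.connected.pos_dist_of_ne hvc.symm
      exact SimpleGraph.dist_eq_one_iff_adj.mp (by push Not at hfar; linarith [hfar v])
    have hstar : G = SimpleGraph.starGraph c := by
      ext u v
      rw [SimpleGraph.starGraph_adj]
      refine ⟨fun huv => ⟨huv.ne, ?_⟩, ?_⟩
      · by_contra! h
        exact hT.isAcyclic.cliqueFree le_rfl {c, u, v}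
          (SimpleGraph.is3Clique_triple_iff.mpr ⟨hnear u h.1, hnear v h.2, huv⟩)
      · rintro ⟨huv, rfl | rfl⟩
        · exact hnear v (Ne.symm huv)
        · exact (hnear u huv).symm
    exact absurd (hstar ▸ nonempty_iso_starGraph c) hns

lemma isHermitian_distMatrix {n : ℕ} (G : SimpleGraph (Fin n)) : (distMatrix G).IsHermitian :=
  Matrix.IsHermitian.ext fun u v => by simp [distMatrix, SimpleGraph.dist_comm]

lemma one_dotProduct_distSignlessLaplacian_mulVec_one {n : ℕ} (G : SimpleGraph (Fin n)) :
    1 ⬝ᵥ ((diagonal (transmission G) + distMatrix G) *ᵥ 1) = 2 * ∑ u, ∑ v, (G.dist u v : ℝ) := by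
  simp only [mulVec, dotProduct, Pi.one_apply, mul_one, one_mul, Matrix.add_apply,
    Finset.sum_add_distrib, diagonal_apply, Finset.sum_ite_eq, Finset.mem_univ, if_true,
    transmission, distMatrix, two_mul]

open Finset in
lemma sum_sum_dist_ge_of_not_iso_starGraph {n : ℕ} {G : SimpleGraph (Fin n)}
    (hT : G.IsTree) (hn : 4 ≤ n) (hns : ¬ Nonempty (G ≃g starGraph n)) :
    2 * (n : ℝ) ^ 2 - 2 * n - 4 ≤ ∑ u, ∑ v, (G.dist u v : ℝ) := by
  classical
  obtain ⟨a, b, a', b', hab, ha', ha'b, hb', hb'a⟩ :=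
    exists_adj_adj_adj_of_not_iso_starGraph hT (by omega) hns
  have hfar := hT.two_mul_card_sub_three_le_card_farPairs hab ha' ha'b hb' hb'a
  have hE := hT.card_edgeFinset
  have hsum := hT.connected.sum_sum_dist_ge
  rw [Fintype.card_fin] at hfar hE hsum
  have hfar' : 2 * ((n : ℝ) - 3) ≤ #G.farPairs := by
    have h := (Nat.cast_le (α := ℝ)).mpr hfar
    push_cast [Nat.cast_sub (by omega : 3 ≤ n)] at h
    exact h
  have hE' : (#G.edgeFinset : ℝ) + 1 = n := by exact_mod_cast hE
  linarith

lemma sqrt_lt_three_mul_sub_five {x : ℝ} (hx : 4 ≤ x) :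
    √(9 * (x - 2) ^ 2 + 4 * (x - 1)) < 3 * x - 5 := by
  rw [Real.sqrt_lt' (by linarith)]
  nlinarith

/-- A tree of order `n ≥ 4` other than the star has distance signless Laplacian
spectral radius greater than `(5n − 8 + √(9(n−2)² + 4(n−1)))/2`. -/
theorem stmt_13 {n : ℕ} (G : SimpleGraph (Fin n)) (hT : G.IsTree) (hn : 4 ≤ n)
    (hns : ¬ Nonempty (G ≃g starGraph n)) :
    specRadius (Matrix.diagonal (transmission G) + distMatrix G) >
      (5 * (n : ℝ) - 8 +
        Real.sqrt (9 * ((n : ℝ) - 2) ^ 2 + 4 * ((n : ℝ) - 1))) / 2 := by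
  have : NeZero n := ⟨by omega⟩
  have hn' : (4 : ℝ) ≤ n := by exact_mod_cast hn
  have hwiener := sum_sum_dist_ge_of_not_iso_starGraph hT hn hns
  have hray := rayleigh_le_specRadius
    ((isHermitian_diagonal (transmission G)).add (isHermitian_distMatrix G))
    (one_ne_zero (α := Fin n → ℝ))
  rw [one_dotProduct_distSignlessLaplacian_mulVec_one, one_dotProduct_one, Fintype.card_fin]
    at hray
  have hρ : 4 * (n : ℝ) - 6 ≤ specRadius (diagonal (transmission G) + distMatrix G) := by
    refine le_trans ?_ hray
    rw [le_div_iff₀ (by positivity)]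
    nlinarith
  linarith [sqrt_lt_three_mul_sub_five hn']
end
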